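/- Over the uniform distribution on subsets T of size N₁, the prediction error of the attributable effect satisfies var(A(T) − N₁·τ̂(T)) = (N·N₁/N₀)·S₀², where S₀² = (1/(N−1))Σᵢ(Y₀(i) − Ȳ(0))². In particular, when the potential outcomes are binary with p₀ = (1/N)ΣY₀(i), this equals N²N₁·p₀(1−p₀)/(N₀(N−1)); the variance does not depend on the association between the potential outcomes. -/

import Mathlib

/-- Expectation of a real-valued statistic `f` of the treatment group `T`,
where `T` is a uniformly random subset of `{1,…,N}` of size `N₁`. -/
noncomputable def expE (N N₁ : ℕ) (f : Finset (Fin N) → ℝ) : ℝ :=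
  (∑ T ∈ Finset.powersetCard N₁ (Finset.univ : Finset (Fin N)), f T) /
    ((Finset.powersetCard N₁ (Finset.univ : Finset (Fin N))).card : ℝ)

/-- Variance of a real-valued statistic `f` over uniformly random subsets of size `N₁`. -/
noncomputable def varE (N N₁ : ℕ) (f : Finset (Fin N) → ℝ) : ℝ :=
  expE N N₁ (fun T => (f T - expE N N₁ f) ^ 2)

/-!
Since `∑ i ∈ Tᶜ, Y₀ i = ∑ i, Y₀ i - ∑ i ∈ T, Y₀ i`, the treated outcomes cancel and
`A(T) - N₁ τ̂(T) = (N₁ / N₀) ∑ i, Y₀ i - (N / N₀) ∑ i ∈ T, Y₀ i`. Its variance is therefore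
`(N / N₀)²` times the variance of the total of a simple random sample of size `N₁` drawn from
the control outcomes, which is the classical `N₁ N₀ / N · S₀²`. That formula comes from the
inclusion probabilities `P(i ∈ T) = N₁ / N` and `P(i, j ∈ T) = N₁ (N₁ - 1) / (N (N - 1))`,
obtained by double counting the pairs `t ⊆ T`. For binary outcomes `∑ Y₀² = ∑ Y₀`, which turns
`S₀²` into `N p₀ (1 - p₀) / (N - 1)`.
-/

open Finset

theorem card_filter_powersetCard_subset_mul_choose {α : Type*} [DecidableEq α]
    {s t : Finset α} (hts : t ⊆ s) (k : ℕ) :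
    #{T ∈ s.powersetCard k | t ⊆ T} * (#s).choose #t = (#s).choose k * k.choose #t := by
  by_cases htk : #t ≤ k
  · rw [card_filter_powersetCard_subset t s k hts htk, Nat.choose_mul htk, mul_comm]
  · have hempty : {T ∈ s.powersetCard k | t ⊆ T} = ∅ := by
      refine filter_eq_empty_iff.mpr fun T hT htT => htk ?_
      exact (mem_powersetCard.mp hT).2 ▸ card_le_card htT
    rw [hempty, Nat.choose_eq_zero_of_lt (not_le.mp htk)]
    simp

section Moments

variable {N : ℕ}

theorem card_filter_powersetCard_mem (k : ℕ) (i : Fin N) :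
    (#{T ∈ univ.powersetCard k | i ∈ T} : ℝ) = N.choose k * (k / N) := by
  have h := card_filter_powersetCard_subset_mul_choose (subset_univ {i}) k
  simp only [singleton_subset_iff, card_singleton, Nat.choose_one_right, card_univ,
    Fintype.card_fin] at h
  have hN : (N : ℝ) ≠ 0 := Nat.cast_ne_zero.mpr (Fin.pos i).ne'
  rw [mul_div_assoc', eq_div_iff hN]
  exact_mod_cast h

theorem card_filter_powersetCard_mem_mem (k : ℕ) {i j : Fin N} (hij : i ≠ j) :
    (#{T ∈ univ.powersetCard k | i ∈ T ∧ j ∈ T} : ℝ)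
      = N.choose k * (k * (k - 1) / (N * (N - 1))) := by
  have hpair : #({i, j} : Finset (Fin N)) = 2 := card_pair hij
  have h := card_filter_powersetCard_subset_mul_choose (subset_univ {i, j}) k
  rw [hpair, card_univ, Fintype.card_fin] at h
  have h' : (#{T ∈ univ.powersetCard k | {i, j} ⊆ T} : ℝ) * (N.choose 2 : ℕ)
      = N.choose k * (k.choose 2 : ℕ) := by exact_mod_cast h
  have hN2 : 2 ≤ N := by simpa [hpair] using card_le_univ ({i, j} : Finset (Fin N))
  have hN : (N : ℝ) * (N - 1) ≠ 0 := by
    have : (2 : ℝ) ≤ N := by exact_mod_cast hN2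
    exact mul_ne_zero (by positivity) (by linarith)
  simp only [insert_subset_iff, singleton_subset_iff, Nat.cast_choose_two] at h'
  rw [mul_div_assoc', eq_div_iff hN]
  linarith

theorem sum_powersetCard_sum_mem (k : ℕ) (y : Fin N → ℝ) :
    ∑ T ∈ univ.powersetCard k, ∑ i ∈ T, y i = N.choose k * (k / N * ∑ i, y i) := by
  rw [sum_comm' (t' := univ) (s' := fun i => {T ∈ univ.powersetCard k | i ∈ T})
    (fun _ _ => by simp), mul_sum, mul_sum]
  refine sum_congr rfl fun i _ => ?_
  rw [sum_const, nsmul_eq_mul, card_filter_powersetCard_mem, mul_assoc]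

-- The joint counts in a shape that splits `∑ i, ∑ j, c i j * y i * y j` into `(∑ y)²` and `∑ y²`.
theorem card_filter_powersetCard_mem_mem_eq (k : ℕ) (i j : Fin N) :
    (#{T ∈ univ.powersetCard k | i ∈ T ∧ j ∈ T} : ℝ)
      = N.choose k * (k * (k - 1) / (N * (N - 1)))
        + if i = j then (N.choose k : ℝ) * (k / N - k * (k - 1) / (N * (N - 1))) else 0 := by
  rcases eq_or_ne i j with rfl | hij
  · simp only [and_self, card_filter_powersetCard_mem, if_true]
    ring
  · rw [card_filter_powersetCard_mem_mem k hij, if_neg hij, add_zero]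

theorem sum_powersetCard_sq_sum_mem (k : ℕ) (y : Fin N → ℝ) :
    ∑ T ∈ univ.powersetCard k, (∑ i ∈ T, y i) ^ 2
      = N.choose k * (k / N * ∑ i, y i ^ 2
          + k * (k - 1) / (N * (N - 1)) * ((∑ i, y i) ^ 2 - ∑ i, y i ^ 2)) := by
  have hswap : ∑ T ∈ univ.powersetCard k, (∑ i ∈ T, y i) ^ 2
      = ∑ i, ∑ j, (#{T ∈ univ.powersetCard k | i ∈ T ∧ j ∈ T} : ℝ) * (y i * y j) := by
    simp_rw [sq, sum_mul_sum]
    rw [sum_comm' (t' := univ) (s' := fun i => {T ∈ univ.powersetCard k | i ∈ T})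
      (fun _ _ => by simp)]
    refine sum_congr rfl fun i _ => ?_
    rw [sum_comm' (t' := univ) (s' := fun j => {T ∈ univ.powersetCard k | i ∈ T ∧ j ∈ T})
      (fun _ _ => by simp [and_assoc])]
    simp only [sum_const, nsmul_eq_mul]
  rw [hswap, sq (∑ i, y i), sum_mul_sum]
  simp only [card_filter_powersetCard_mem_mem_eq, add_mul, sum_add_distrib, ite_mul,
    zero_mul, sum_ite_eq, mem_univ, if_true, ← mul_sum, ← sq]
  ring

end Moments

theorem sum_sq_sub_mean {ι : Type*} [Fintype ι] (y : ι → ℝ) :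
    ∑ i, (y i - (∑ j, y j) / Fintype.card ι) ^ 2
      = ∑ i, y i ^ 2 - (∑ i, y i) ^ 2 / Fintype.card ι := by
  rcases isEmpty_or_nonempty ι with hι | hι
  · simp
  simp only [sub_sq, sum_add_distrib, sum_sub_distrib, ← sum_mul, ← mul_sum, sum_const,
    card_univ, nsmul_eq_mul]
  field_simp
  ring

theorem sum_sq_sub_mean_of_zero_or_one {ι : Type*} [Fintype ι] {y : ι → ℝ}
    (hy : ∀ i, y i = 0 ∨ y i = 1) :
    ∑ i, (y i - (∑ j, y j) / Fintype.card ι) ^ 2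
      = Fintype.card ι * ((∑ j, y j) / Fintype.card ι) * (1 - (∑ j, y j) / Fintype.card ι) := by
  rcases isEmpty_or_nonempty ι with hι | hι
  · simp
  have hsq : ∑ i, y i ^ 2 = ∑ i, y i :=
    sum_congr rfl fun i _ => by rcases hy i with h | h <;> simp [h]
  rw [sum_sq_sub_mean, hsq]
  field_simp

section Variance

variable {N k : ℕ}

theorem expE_eq_sum_div (f : Finset (Fin N) → ℝ) :
    expE N k f = (∑ T ∈ univ.powersetCard k, f T) / N.choose k := by
  rw [expE, card_powersetCard, card_univ, Fintype.card_fin]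

theorem expE_const_add_mul (hk : k ≤ N) (a b : ℝ) (f : Finset (Fin N) → ℝ) :
    expE N k (fun T => a + b * f T) = a + b * expE N k f := by
  have hC : (N.choose k : ℝ) ≠ 0 := Nat.cast_ne_zero.mpr (Nat.choose_pos hk).ne'
  simp only [expE_eq_sum_div, sum_add_distrib, sum_const, card_powersetCard, card_univ,
    Fintype.card_fin, nsmul_eq_mul, ← mul_sum]
  field_simp

theorem varE_const_add_mul (hk : k ≤ N) (a b : ℝ) (f : Finset (Fin N) → ℝ) :
    varE N k (fun T => a + b * f T) = b ^ 2 * varE N k f := by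
  have hsq : ∀ T, (a + b * f T - (a + b * expE N k f)) ^ 2
      = 0 + b ^ 2 * (f T - expE N k f) ^ 2 := fun T => by ring
  rw [varE, varE, expE_const_add_mul hk]
  simp only [hsq]
  rw [expE_const_add_mul hk, zero_add]

theorem varE_eq_expE_sq_sub (hk : k ≤ N) (f : Finset (Fin N) → ℝ) :
    varE N k f = expE N k (fun T => f T ^ 2) - expE N k f ^ 2 := by
  have hC : (N.choose k : ℝ) ≠ 0 := Nat.cast_ne_zero.mpr (Nat.choose_pos hk).ne'
  simp only [varE, expE_eq_sum_div, sub_sq, sum_add_distrib, sum_sub_distrib, ← sum_mul,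
    ← mul_sum, sum_const, card_powersetCard, card_univ, Fintype.card_fin, nsmul_eq_mul]
  field_simp
  ring

theorem varE_sum_mem (hN : 2 ≤ N) (hk : k ≤ N) (y : Fin N → ℝ) :
    varE N k (fun T => ∑ i ∈ T, y i)
      = k * (N - k) / N * ((∑ i, (y i - (∑ j, y j) / N) ^ 2) / (N - 1)) := by
  have hC : (N.choose k : ℝ) ≠ 0 := Nat.cast_ne_zero.mpr (Nat.choose_pos hk).ne'
  have hN' : (N : ℝ) - 1 ≠ 0 := by
    have : (2 : ℝ) ≤ N := by exact_mod_cast hN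
    linarith
  have hdev := sum_sq_sub_mean y
  rw [Fintype.card_fin] at hdev
  rw [varE_eq_expE_sq_sub hk, expE_eq_sum_div, expE_eq_sum_div, sum_powersetCard_sum_mem,
    sum_powersetCard_sq_sum_mem, hdev]
  field_simp
  ring

end Variance

/-- The prediction error of the attributable effect satisfies
`var(A(T) − N₁ τ̂(T)) = (N N₁ / N₀) S₀²`; in particular, for binary outcomes
this equals `N² N₁ p₀ (1 − p₀) / (N₀ (N − 1))`, so the variance does not
depend on the association between the potential outcomes. -/
theorem stmt_19 (N N₁ N₀ : ℕ) (hN : 2 ≤ N) (hN₁ : 1 ≤ N₁) (hN₁' : N₁ ≤ N - 1)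
    (hN₀ : N₀ = N - N₁) (Y1 Y0 : Fin N → ℝ) (Ybar0 S0sq : ℝ)
    (hYbar0 : Ybar0 = (∑ i, Y0 i) / N)
    (hS0 : S0sq = (∑ i, (Y0 i - Ybar0) ^ 2) / (N - 1)) :
    varE N N₁ (fun T =>
        (∑ i ∈ T, (Y1 i - Y0 i))
          - N₁ * ((∑ i ∈ T, Y1 i) / N₁ - (∑ i ∈ Tᶜ, Y0 i) / N₀))
      = (N : ℝ) * N₁ / N₀ * S0sq ∧
    ((∀ i, Y0 i = 0 ∨ Y0 i = 1) → ∀ p0 : ℝ, p0 = (∑ i, Y0 i) / N →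
      varE N N₁ (fun T =>
          (∑ i ∈ T, (Y1 i - Y0 i))
            - N₁ * ((∑ i ∈ T, Y1 i) / N₁ - (∑ i ∈ Tᶜ, Y0 i) / N₀))
        = (N : ℝ) ^ 2 * N₁ * p0 * (1 - p0) / (N₀ * (N - 1))) := by
  have hN₁N : N₁ ≤ N := by omega
  have hN₀r : (N₀ : ℝ) ≠ 0 := Nat.cast_ne_zero.mpr (by omega)
  have hNsplit : (N : ℝ) = N₁ + N₀ := by exact_mod_cast (by omega : N = N₁ + N₀)
  have hstat : (fun T : Finset (Fin N) => (∑ i ∈ T, (Y1 i - Y0 i))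
        - N₁ * ((∑ i ∈ T, Y1 i) / N₁ - (∑ i ∈ Tᶜ, Y0 i) / N₀))
      = fun T => N₁ / N₀ * ∑ i, Y0 i + -(N / N₀) * ∑ i ∈ T, Y0 i := by
    funext T
    rw [← sum_add_sum_compl T Y0, sum_sub_distrib, hNsplit]
    field_simp
    ring
  have hvar : varE N N₁ (fun T => (∑ i ∈ T, (Y1 i - Y0 i))
        - N₁ * ((∑ i ∈ T, Y1 i) / N₁ - (∑ i ∈ Tᶜ, Y0 i) / N₀)) = (N : ℝ) * N₁ / N₀ * S0sq := by
    rw [hstat, varE_const_add_mul hN₁N, varE_sum_mem hN hN₁N, ← hYbar0, ← hS0, hNsplit]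
    field_simp
    ring
  refine ⟨hvar, fun hbin p0 hp0 => ?_⟩
  have hdev := sum_sq_sub_mean_of_zero_or_one hbin
  rw [Fintype.card_fin] at hdev
  rw [hvar, hS0, hYbar0, hdev, ← hp0]
  field_simp
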